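/- Let G be a graph with minimum degree δ(G) ≥ 1. Then γ_SMB'(G) = 3 if and only if both of the following hold: (i) G has no strong support vertices, and (ii) there exists a vertex u ∈ V(G) such that either G − u has at least two strong support vertices, or G − u has exactly one isolated vertex and a strong support vertex. -/

import Mathlib

/-!
Formalization of the Maker-Breaker domination game (MBD game).

In the MBD game on a graph `G`, Dominator and Staller alternately select
previously unplayed vertices.  Dominator wins when the set of vertices he has
selected is a dominating set of `G`; Staller wins when she has selected a
vertex of every dominating set of `G`, which happens exactly when the closed
neighbourhood of some vertex is entirely contained in her set of selected
vertices.
-/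

/-- `D` is a dominating set of `G` (as a finset of vertices). -/
def IsDomSet {V : Type*} (G : SimpleGraph V) (D : Finset V) : Prop :=
  ∀ v, v ∈ D ∨ ∃ u ∈ D, G.Adj u v

/-- Staller (whose selected vertices form `S`) has won: she owns the whole
closed neighbourhood of some vertex, hence a vertex of every dominating set. -/
def StallerWon {V : Type*} (G : SimpleGraph V) (S : Finset V) : Prop :=
  ∃ v, v ∈ S ∧ ∀ u, G.Adj v u → u ∈ S

section Game

variable {V : Type*} [DecidableEq V]

mutual
  /-- Position with Dominator's vertices `D`, Staller's vertices `S` and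
  Dominator to move: Dominator can guarantee to complete a dominating set
  using at most `k` further moves of his own. -/
  inductive DomWinD (G : SimpleGraph V) : Finset V → Finset V → ℕ → Prop where
    | done (D S : Finset V) (k : ℕ) : IsDomSet G D → DomWinD G D S k
    | step (D S : Finset V) (k : ℕ) (v : V) : v ∉ D → v ∉ S →
        DomWinS G (insert v D) S k → DomWinD G D S (k + 1)

  /-- Position with Dominator's vertices `D`, Staller's vertices `S` and
  Staller to move: Dominator can guarantee to complete a dominating set
  using at most `k` further moves of his own. -/
  inductive DomWinS (G : SimpleGraph V) : Finset V → Finset V → ℕ → Prop where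
    | done (D S : Finset V) (k : ℕ) : IsDomSet G D → DomWinS G D S k
    | step (D S : Finset V) (k : ℕ) : (∃ w, w ∉ D ∧ w ∉ S) →
        (∀ w, w ∉ D → w ∉ S → DomWinD G D (insert w S) k) → DomWinS G D S k
end

mutual
  /-- Position with Dominator's vertices `D`, Staller's vertices `S` and
  Staller to move: Staller can guarantee to claim a whole closed neighbourhood
  using at most `k` further moves of her own. -/
  inductive StalWinS (G : SimpleGraph V) : Finset V → Finset V → ℕ → Prop where
    | done (D S : Finset V) (k : ℕ) : StallerWon G S → StalWinS G D S k
    | step (D S : Finset V) (k : ℕ) (w : V) : w ∉ D → w ∉ S →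
        StalWinD G D (insert w S) k → StalWinS G D S (k + 1)

  /-- Position with Dominator's vertices `D`, Staller's vertices `S` and
  Dominator to move: Staller can guarantee to claim a whole closed
  neighbourhood using at most `k` further moves of her own. -/
  inductive StalWinD (G : SimpleGraph V) : Finset V → Finset V → ℕ → Prop where
    | done (D S : Finset V) (k : ℕ) : StallerWon G S → StalWinD G D S k
    | step (D S : Finset V) (k : ℕ) : (∃ v, v ∉ D ∧ v ∉ S) →
        (∀ v, v ∉ D → v ∉ S → StalWinS G (insert v D) S k) → StalWinD G D S k
end

/-- `γ_MB(G)`: minimum number of Dominator's moves with which he can guarantee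
to win the D-game (Dominator moves first); `⊤` if he cannot win it. -/
noncomputable def gammaMB (G : SimpleGraph V) : ℕ∞ :=
  sInf {k : ℕ∞ | ∃ n : ℕ, k = n ∧ DomWinD G ∅ ∅ n}

/-- `γ_MB'(G)`: minimum number of Dominator's moves with which he can guarantee
to win the S-game (Staller moves first); `⊤` if he cannot win it. -/
noncomputable def gammaMB' (G : SimpleGraph V) : ℕ∞ :=
  sInf {k : ℕ∞ | ∃ n : ℕ, k = n ∧ DomWinS G ∅ ∅ n}

/-- `γ_SMB(G)`: minimum number of Staller's moves with which she can guarantee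
to win the D-game (Dominator moves first); `⊤` if she cannot win it. -/
noncomputable def gammaSMB (G : SimpleGraph V) : ℕ∞ :=
  sInf {k : ℕ∞ | ∃ n : ℕ, k = n ∧ StalWinD G ∅ ∅ n}

/-- `γ_SMB'(G)`: minimum number of Staller's moves with which she can guarantee
to win the S-game (Staller moves first); `⊤` if she cannot win it. -/
noncomputable def gammaSMB' (G : SimpleGraph V) : ℕ∞ :=
  sInf {k : ℕ∞ | ∃ n : ℕ, k = n ∧ StalWinS G ∅ ∅ n}

/-- Outcome `𝒟`: Dominator has a winning strategy no matter who starts. -/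
def OutcomeD (G : SimpleGraph V) : Prop :=
  (∃ n, DomWinD G ∅ ∅ n) ∧ (∃ n, DomWinS G ∅ ∅ n)

/-- Outcome `𝒮`: Staller has a winning strategy no matter who starts. -/
def OutcomeS (G : SimpleGraph V) : Prop :=
  (∃ n, StalWinD G ∅ ∅ n) ∧ (∃ n, StalWinS G ∅ ∅ n)

/-- Outcome `𝒩`: the first player has a winning strategy. -/
def OutcomeN (G : SimpleGraph V) : Prop :=
  (∃ n, DomWinD G ∅ ∅ n) ∧ (∃ n, StalWinS G ∅ ∅ n)

end Game

/-- The corona product `G ⊙ H`: one copy of `G`, a copy of `H` for every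
vertex of `G`, and the `i`-th vertex of `G` joined to every vertex of the
`i`-th copy of `H`. -/
def coronaProd {α β : Type*} (G : SimpleGraph α) (H : SimpleGraph β) :
    SimpleGraph (α ⊕ α × β) where
  Adj x y :=
    match x, y with
    | Sum.inl a, Sum.inl a' => G.Adj a a'
    | Sum.inl a, Sum.inr p => a = p.1
    | Sum.inr p, Sum.inl a => a = p.1
    | Sum.inr p, Sum.inr q => p.1 = q.1 ∧ H.Adj p.2 q.2
  symm := by
    refine ⟨?_⟩
    rintro (a | p) (a' | q) h
    · exact G.adj_symm h
    · exact h
    · exact h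
    · exact ⟨h.1.symm, H.adj_symm h.2⟩
  loopless := by
    refine ⟨?_⟩
    rintro (a | p) h
    · exact G.irrefl h
    · exact H.irrefl h.2

/-- The domination number `γ(G)` of a finite graph. -/
noncomputable def domNumber {V : Type*} [Fintype V] (G : SimpleGraph V) : ℕ :=
  sInf {n : ℕ | ∃ D : Finset V, D.card = n ∧ IsDomSet G D}

/-- `v` is a dominating vertex: it is adjacent to all other vertices. -/
def IsDomVertex {V : Type*} (G : SimpleGraph V) (v : V) : Prop :=
  ∀ u, u ≠ v → G.Adj v u

/-- `v` is an isolated vertex (degree `0`). -/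
def IsIsolatedVertex {V : Type*} (G : SimpleGraph V) (v : V) : Prop :=
  ∀ u, ¬ G.Adj v u

/-- `v` is a leaf (degree `1`). -/
def IsLeaf {V : Type*} (G : SimpleGraph V) (v : V) : Prop :=
  ∃! u, G.Adj v u

/-- `v` is a strong support vertex: adjacent to at least two leaves. -/
def IsStrongSupport {V : Type*} (G : SimpleGraph V) (v : V) : Prop :=
  ∃ u w, u ≠ w ∧ G.Adj v u ∧ G.Adj v w ∧ IsLeaf G u ∧ IsLeaf G w


/-! A strong support vertex of `G` is exactly a two-move win for Staller (she claims it and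
then one of its two leaves), which gives (i). A three-move win starts with a vertex `u`, after
which Staller plays in `G - u`: an isolated vertex of `G - u` wins in one more move, and a strong
support vertex of `G - u` together with its leaves (a gadget) in two. Gadgets of distinct strong
support vertices are disjoint, so one of two gadgets survives any reply of Dominator. Conversely,
if (ii) fails everywhere, Dominator answers `u` by a vertex that destroys the only gadget or
isolated vertex of `G - u` and leaves no threat at `u` itself; in the delicate case, `u` of degree
at most two, any failure of this reply would make (ii) hold at the strong support vertex of
`G - u`. -/

section Game

variable {V : Type*} [DecidableEq V] {G : SimpleGraph V} {D S : Finset V} {k : ℕ}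

theorem StalWinS.stallerWon_of_zero (h : StalWinS G D S 0) : StallerWon G S := by
  cases h with
  | done _ _ _ h => exact h

theorem StalWinD.stallerWon_of_zero (h : StalWinD G D S 0) : StallerWon G S := by
  cases h with
  | done _ _ _ h => exact h
  | step _ _ _ hfree hall =>
    obtain ⟨v, hvD, hvS⟩ := hfree
    exact (hall v hvD hvS).stallerWon_of_zero

theorem StalWinS.exists_of_succ (h : StalWinS G D S (k + 1)) :
    StallerWon G S ∨ ∃ w, w ∉ D ∧ w ∉ S ∧ StalWinD G D (insert w S) k := by
  cases h with
  | done _ _ _ h => exact .inl h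
  | step _ _ _ w hwD hwS h => exact .inr ⟨w, hwD, hwS, h⟩

theorem StalWinD.exists_two_threats_of_one (h : StalWinD G D S 1) :
    StallerWon G S ∨ ∃ y₁ y₂, y₁ ≠ y₂ ∧ y₁ ∉ D ∧ y₂ ∉ D ∧ y₁ ∉ S ∧ y₂ ∉ S ∧
      StallerWon G (insert y₁ S) ∧ StallerWon G (insert y₂ S) := by
  cases h with
  | done _ _ _ h => exact .inl h
  | step _ _ _ hfree hall =>
    have threat : ∀ v, v ∉ D → v ∉ S →
        StallerWon G S ∨ ∃ y, y ≠ v ∧ y ∉ D ∧ y ∉ S ∧ StallerWon G (insert y S) := by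
      intro v hvD hvS
      rcases (hall v hvD hvS).exists_of_succ with hwon | ⟨y, hyD, hyS, hy⟩
      · exact .inl hwon
      · rw [Finset.mem_insert, not_or] at hyD
        exact .inr ⟨y, hyD.1, hyD.2, hyS, hy.stallerWon_of_zero⟩
    obtain ⟨v, hvD, hvS⟩ := hfree
    rcases threat v hvD hvS with hwon | ⟨y₁, -, h₁D, h₁S, h₁⟩
    · exact .inl hwon
    rcases threat y₁ h₁D h₁S with hwon | ⟨y₂, h₂₁, h₂D, h₂S, h₂⟩
    · exact .inl hwon
    · exact .inr ⟨y₁, y₂, h₂₁.symm, h₁D, h₂D, h₁S, h₂S, h₁, h₂⟩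

theorem StalWinS.of_forall_adj_mem {x : V} (hxD : x ∉ D) (hxS : x ∉ S)
    (hN : ∀ z, G.Adj x z → z ∈ S) : StalWinS G D S (k + 1) :=
  .step _ _ _ x hxD hxS <| .done _ _ _
    ⟨x, Finset.mem_insert_self x S, fun z hz => Finset.mem_insert_of_mem (hN z hz)⟩

theorem StalWinS.of_double_threat {s a b : V} (hsD : s ∉ D) (hsS : s ∉ S) (hab : a ≠ b)
    (haD : a ∉ D) (haS : a ∉ insert s S) (hbD : b ∉ D) (hbS : b ∉ insert s S)
    (hNa : ∀ z, G.Adj a z → z ∈ insert s S) (hNb : ∀ z, G.Adj b z → z ∈ insert s S) :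
    StalWinS G D S (k + 2) := by
  refine .step _ _ _ s hsD hsS (.step _ _ _ ⟨a, haD, haS⟩ fun v hvD _ => ?_)
  by_cases hva : v = a
  · subst hva
    exact .of_forall_adj_mem (by simp [Ne.symm hab, hbD]) hbS hNb
  · exact .of_forall_adj_mem (by simp [Ne.symm hva, haD]) haS hNa

theorem StallerWon.pair {y w : V} (h : StallerWon G {y, w}) :
    (∀ z, G.Adj w z → z = y) ∨ ∀ z, G.Adj y z → z = w := by
  obtain ⟨x, hx, hN⟩ := h
  simp only [Finset.mem_insert, Finset.mem_singleton] at hx hN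
  rcases hx with rfl | rfl
  · exact .inr fun z hz => (hN z hz).resolve_left (G.ne_of_adj hz).symm
  · exact .inl fun z hz => (hN z hz).resolve_right (G.ne_of_adj hz).symm

theorem StallerWon.triple {y w u : V} (h : StallerWon G {y, w, u}) :
    (∀ z, G.Adj u z → z = y ∨ z = w) ∨ (∀ z, G.Adj w z → z = y ∨ z = u) ∨
      ∀ z, G.Adj y z → z = w ∨ z = u := by
  obtain ⟨x, hx, hN⟩ := h
  simp only [Finset.mem_insert, Finset.mem_singleton] at hx hN
  rcases hx with rfl | rfl | rfl
  · exact .inr (.inr fun z hz => (hN z hz).resolve_left (G.ne_of_adj hz).symm)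
  · refine .inr (.inl fun z hz => ?_)
    have := G.ne_of_adj hz
    grind
  · refine .inl fun z hz => ?_
    have := G.ne_of_adj hz
    grind

theorem gammaSMB'_eq_coe_iff (n : ℕ) :
    gammaSMB' G = n ↔ StalWinS G ∅ ∅ n ∧ ∀ m < n, ¬ StalWinS G ∅ ∅ m := by
  set A := {k : ℕ∞ | ∃ m : ℕ, k = m ∧ StalWinS G ∅ ∅ m}
  have hle : ∀ m, StalWinS G ∅ ∅ m → gammaSMB' G ≤ m := fun m hm => sInf_le ⟨m, rfl, hm⟩
  constructor
  · intro h
    have hA : A.Nonempty := by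
      by_contra hA
      rw [Set.not_nonempty_iff_eq_empty] at hA
      exact ENat.natCast_ne_top n (h.symm.trans (by simp [gammaSMB', A, hA]))
    obtain ⟨m, hm, hwin⟩ := csInf_mem hA
    have hmn : m = n := by exact_mod_cast hm.symm.trans h
    refine ⟨hmn ▸ hwin, fun m hm hwin => ?_⟩
    have := h ▸ hle m hwin
    norm_cast at this
    omega
  · rintro ⟨hn, hlt⟩
    refine le_antisymm (hle n hn) (le_sInf ?_)
    rintro _ ⟨m, rfl, hm⟩
    exact_mod_cast not_lt.mp fun h => hlt m h hm

end Game

section Deletion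

variable {V : Type*} {G : SimpleGraph V} {u s t a x : V}

/-! The graph `G - u` is described inside `G`: `IsLeafMinus G u s a` says that `a` is a leaf of
`G - u` whose neighbour is `s`. -/

def IsIsolatedMinus (G : SimpleGraph V) (u x : V) : Prop :=
  x ≠ u ∧ ∀ z, G.Adj x z → z = u

def IsLeafMinus (G : SimpleGraph V) (u s a : V) : Prop :=
  a ≠ u ∧ s ≠ u ∧ G.Adj s a ∧ ∀ z, G.Adj a z → z = s ∨ z = u

def IsStrongSupportMinus (G : SimpleGraph V) (u s : V) : Prop :=
  ∃ a b, a ≠ b ∧ IsLeafMinus G u s a ∧ IsLeafMinus G u s b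

/-- Condition (ii) of the theorem; "exactly one isolated vertex" is weakened to "one", which is
equivalent when `G` has no strong support vertex. -/
def ConditionII (G : SimpleGraph V) (u : V) : Prop :=
  (∃ s₁ s₂, s₁ ≠ s₂ ∧ IsStrongSupportMinus G u s₁ ∧ IsStrongSupportMinus G u s₂) ∨
    ((∃ x, IsIsolatedMinus G u x) ∧ ∃ s, IsStrongSupportMinus G u s)

theorem IsLeafMinus.ne_center (h : IsLeafMinus G u s a) : a ≠ s :=
  (G.ne_of_adj h.2.2.1).symm

theorem IsLeafMinus.eq_center_of_adj {z : V} (h : IsLeafMinus G u s a) (hz : G.Adj a z)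
    (hzu : z ≠ u) : z = s :=
  (h.2.2.2 z hz).resolve_right hzu

theorem IsLeafMinus.center_unique (h : IsLeafMinus G u s a) (h' : IsLeafMinus G u t a) :
    t = s :=
  h.eq_center_of_adj (G.adj_symm h'.2.2.1) h'.2.1

theorem IsLeafMinus.adj_or_forall_adj_eq (h : IsLeafMinus G u s a) :
    G.Adj u a ∨ ∀ z, G.Adj a z → z = s := by
  by_cases hua : G.Adj u a
  · exact .inl hua
  · exact .inr fun z hz => h.eq_center_of_adj hz fun hzu => hua (hzu ▸ G.adj_symm hz)

theorem IsLeafMinus.swap (h : IsLeafMinus G u s a) (hua : G.Adj u a) : IsLeafMinus G s u a :=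
  ⟨h.ne_center, h.2.1.symm, hua, fun z hz => (h.2.2.2 z hz).symm⟩

theorem IsStrongSupportMinus.ne (h : IsStrongSupportMinus G u s) : s ≠ u := by
  obtain ⟨a, -, -, ha, -⟩ := h
  exact ha.2.1

theorem IsStrongSupportMinus.not_isLeafMinus (h : IsStrongSupportMinus G u s) :
    ¬ IsLeafMinus G u t s := by
  intro hs
  obtain ⟨a, b, hab, ha, hb⟩ := h
  exact hab ((hs.eq_center_of_adj ha.2.2.1 ha.1).trans (hs.eq_center_of_adj hb.2.2.1 hb.1).symm)

theorem IsStrongSupportMinus.notMem_gadget (hs : IsStrongSupportMinus G u s)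
    (ht : IsStrongSupportMinus G u t) (hst : s ≠ t) (hx : x = s ∨ IsLeafMinus G u s x) :
    x ≠ t ∧ ¬ IsLeafMinus G u t x := by
  rcases hx with rfl | hx
  · exact ⟨hst, hs.not_isLeafMinus⟩
  · exact ⟨by rintro rfl; exact ht.not_isLeafMinus hx, fun h => hst (h.center_unique hx)⟩

theorem IsIsolatedMinus.not_isLeafMinus (hx : IsIsolatedMinus G u x) : ¬ IsLeafMinus G u s x :=
  fun h => h.2.1 (hx.2 s (G.adj_symm h.2.2.1))

theorem IsIsolatedMinus.ne_of_isLeafMinus (hx : IsIsolatedMinus G u x)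
    (ha : IsLeafMinus G u s a) : x ≠ s := by
  rintro rfl
  exact ha.1 (hx.2 a ha.2.2.1)

theorem IsIsolatedMinus.adj (hδ : ∀ v, ∃ z, G.Adj v z) (hx : IsIsolatedMinus G u x) :
    G.Adj u x := by
  obtain ⟨z, hz⟩ := hδ x
  exact hx.2 z hz ▸ G.adj_symm hz

theorem IsIsolatedMinus.unique (hδ : ∀ v, ∃ z, G.Adj v z) (hi : ∀ v, ¬ IsStrongSupport G v)
    {y : V} (hx : IsIsolatedMinus G u x) (hy : IsIsolatedMinus G u y) : x = y := by
  by_contra hxy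
  exact hi u ⟨x, y, hxy, hx.adj hδ, hy.adj hδ, ⟨u, G.adj_symm (hx.adj hδ), hx.2⟩,
    ⟨u, G.adj_symm (hy.adj hδ), hy.2⟩⟩

theorem isIsolatedVertex_induce_iff (x : ({x : V | x ≠ u} : Set V)) :
    IsIsolatedVertex (G.induce {x : V | x ≠ u}) x ↔ IsIsolatedMinus G u x :=
  ⟨fun h => ⟨x.2, fun z hz => by_contra fun hzu => h ⟨z, hzu⟩ hz⟩,
    fun h w hw => w.2 (h.2 w hw)⟩

theorem isStrongSupport_induce_iff (v : ({x : V | x ≠ u} : Set V)) :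
    IsStrongSupport (G.induce {x : V | x ≠ u}) v ↔ IsStrongSupportMinus G u v := by
  have isLeaf_iff : ∀ c : ({x : V | x ≠ u} : Set V), G.Adj v c →
      (IsLeaf (G.induce {x : V | x ≠ u}) c ↔ IsLeafMinus G u v c) := by
    intro c hvc
    refine ⟨fun ⟨w, _, hw⟩ => ⟨c.2, v.2, hvc, fun z hz => ?_⟩,
      fun h => ⟨v, G.adj_symm hvc, fun z hz => Subtype.ext (h.eq_center_of_adj hz z.2)⟩⟩
    by_cases hzu : z = u
    · exact .inr hzu
    · exact .inl (congrArg Subtype.val ((hw ⟨z, hzu⟩ hz).trans (hw v (G.adj_symm hvc)).symm))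
  constructor
  · rintro ⟨a, b, hab, hva, hvb, ha, hb⟩
    exact ⟨a, b, Subtype.coe_injective.ne hab, (isLeaf_iff a hva).1 ha, (isLeaf_iff b hvb).1 hb⟩
  · rintro ⟨a, b, hab, ha, hb⟩
    refine ⟨⟨a, ha.1⟩, ⟨b, hb.1⟩, fun h => hab (congrArg Subtype.val h), ha.2.2.1, hb.2.2.1,
      (isLeaf_iff ⟨a, ha.1⟩ ha.2.2.1).2 ha, (isLeaf_iff ⟨b, hb.1⟩ hb.2.2.1).2 hb⟩

theorem conditionII_iff (hδ : ∀ v, ∃ z, G.Adj v z) (hi : ∀ v, ¬ IsStrongSupport G v) (u : V) :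
    ConditionII G u ↔
      ((∃ v w : ({x : V | x ≠ u} : Set V), v ≠ w ∧
          IsStrongSupport (G.induce {x : V | x ≠ u}) v ∧
          IsStrongSupport (G.induce {x : V | x ≠ u}) w) ∨
        ((∃! v : ({x : V | x ≠ u} : Set V), IsIsolatedVertex (G.induce {x : V | x ≠ u}) v) ∧
          ∃ v : ({x : V | x ≠ u} : Set V), IsStrongSupport (G.induce {x : V | x ≠ u}) v)) := by
  simp only [isStrongSupport_induce_iff, isIsolatedVertex_induce_iff]
  constructor
  · rintro (⟨s₁, s₂, hne, h₁, h₂⟩ | ⟨⟨x, hx⟩, s, hs⟩)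
    · exact .inl ⟨⟨s₁, h₁.ne⟩, ⟨s₂, h₂.ne⟩, fun h => hne (congrArg Subtype.val h), h₁, h₂⟩
    · exact .inr ⟨⟨⟨x, hx.1⟩, hx, fun y hy => Subtype.ext (hy.unique hδ hi hx)⟩, ⟨s, hs.ne⟩, hs⟩
  · rintro (⟨v, w, hne, hv, hw⟩ | ⟨⟨x, hx, -⟩, v, hv⟩)
    · exact .inl ⟨v, w, Subtype.coe_injective.ne hne, hv, hw⟩
    · exact .inr ⟨⟨x, hx⟩, v, hv⟩

theorem not_stallerWon_singleton (hδ : ∀ v, ∃ z, G.Adj v z) (u : V) : ¬ StallerWon G {u} := by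
  rintro ⟨x, hx, hN⟩
  rw [Finset.mem_singleton] at hx
  obtain ⟨z, hz⟩ := hδ x
  exact G.ne_of_adj hz (hx.trans (Finset.mem_singleton.mp (hN z hz)).symm)

theorem exists_adj_ne_ne {p q r : V} (hpq : p ≠ q) (hpr : p ≠ r) (hqr : q ≠ r) (hp : G.Adj u p)
    (hq : G.Adj u q) (hr : G.Adj u r) (w y : V) : ∃ z, G.Adj u z ∧ z ≠ w ∧ z ≠ y := by
  by_contra! hc
  have hwy : ∀ z, G.Adj u z → z = w ∨ z = y := fun z hz => or_iff_not_imp_left.2 (hc z hz)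
  rcases hwy p hp with rfl | rfl <;> rcases hwy q hq with rfl | rfl <;>
    rcases hwy r hr with rfl | rfl <;> contradiction

/-- After Staller's opening `u` and Dominator's reply `v`, Staller has no two-move win through
`N[u]`, through an isolated vertex of `G - u`, or through a strong support vertex of `G - u`. -/
def IsBlockingReply (G : SimpleGraph V) (u v : V) : Prop :=
  (∀ w y, w ≠ v → y ≠ v → ∃ z, G.Adj u z ∧ z ≠ w ∧ z ≠ y) ∧
    (∀ x, IsIsolatedMinus G u x → x = v) ∧
    ∀ s a b, s ≠ v → a ≠ b → IsLeafMinus G u s a → IsLeafMinus G u s b → a = v ∨ b = v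

theorem exists_isBlockingReply_of_forall_not_isStrongSupportMinus (hδ : ∀ v, ∃ z, G.Adj v z)
    (hi : ∀ v, ¬ IsStrongSupport G v) (h : ∀ s, ¬ IsStrongSupportMinus G u s) :
    ∃ v, v ≠ u ∧ IsBlockingReply G u v := by
  obtain ⟨v, hv, hiso⟩ : ∃ v, G.Adj u v ∧ ∀ x, IsIsolatedMinus G u x → x = v := by
    by_cases hx : ∃ x, IsIsolatedMinus G u x
    · obtain ⟨x, hx⟩ := hx
      exact ⟨x, hx.adj hδ, fun y hy => hy.unique hδ hi hx⟩
    · obtain ⟨v, hv⟩ := hδ u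
      exact ⟨v, hv, fun x hx' => absurd ⟨x, hx'⟩ hx⟩
  exact ⟨v, (G.ne_of_adj hv).symm, fun w y hw hy => ⟨v, hv, hw.symm, hy.symm⟩, hiso,
    fun s a b _ hab ha hb => absurd ⟨a, b, hab, ha, hb⟩ (h s)⟩

theorem exists_isBlockingReply_of_isStrongSupportMinus (hi : ∀ v, ¬ IsStrongSupport G v)
    (hII : ∀ u, ¬ ConditionII G u) (hs : IsStrongSupportMinus G u s) :
    ∃ v, v ≠ u ∧ IsBlockingReply G u v := by
  have huniq : ∀ t, IsStrongSupportMinus G u t → t = s := fun t ht =>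
    by_contra fun hts => hII u (.inl ⟨t, s, hts, ht, hs⟩)
  have hno : ∀ x, ¬ IsIsolatedMinus G u x := fun x hx => hII u (.inr ⟨⟨x, hx⟩, s, hs⟩)
  have no_two_leaves : ∀ a b, a ≠ b → IsLeafMinus G u s a → IsLeafMinus G u s b →
      (∀ z, G.Adj a z → z = s) → (∀ z, G.Adj b z → z = s) → False :=
    fun a b hab ha hb hNa hNb => hi s ⟨a, b, hab, ha.2.2.1, hb.2.2.1,
      ⟨s, G.adj_symm ha.2.2.1, hNa⟩, ⟨s, G.adj_symm hb.2.2.1, hNb⟩⟩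
  by_cases h3 : ∃ p q r, p ≠ q ∧ p ≠ r ∧ q ≠ r ∧ G.Adj u p ∧ G.Adj u q ∧ G.Adj u r
  · obtain ⟨p, q, r, hpq, hpr, hqr, hp, hq, hr⟩ := h3
    refine ⟨s, hs.ne, fun w y _ _ => ?_, fun x hx => (hno x hx).elim,
      fun t a b hts hab ha hb => (hts (huniq t ⟨a, b, hab, ha, hb⟩)).elim⟩
    exact exists_adj_ne_ne hpq hpr hqr hp hq hr w y
  obtain ⟨p, hp, hup⟩ : ∃ p, IsLeafMinus G u s p ∧ G.Adj u p := by
    obtain ⟨a, b, hab, ha, hb⟩ := hs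
    rcases ha.adj_or_forall_adj_eq with hua | hNa
    · exact ⟨a, ha, hua⟩
    rcases hb.adj_or_forall_adj_eq with hub | hNb
    · exact ⟨b, hb, hub⟩
    exact (no_two_leaves a b hab ha hb hNa hNb).elim
  refine ⟨p, hp.1, fun w y hw hy => ⟨p, hup, hw.symm, hy.symm⟩, fun x hx => (hno x hx).elim,
    fun t a b _ hab ha hb => ?_⟩
  obtain rfl : s = t := (huniq t ⟨a, b, hab, ha, hb⟩).symm
  by_contra! hne
  -- two leaves of `s` adjacent to `u` and one that is not give condition (ii) at `s`
  have mixed : ∀ c d, c ≠ p → IsLeafMinus G u s c → G.Adj u c → IsLeafMinus G u s d →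
      (∀ z, G.Adj d z → z = s) → False := fun c d hcp hc huc hd hNd =>
    hII s (.inr ⟨⟨d, hd.ne_center, hNd⟩, u, p, c, hcp.symm, hp.swap hup, hc.swap huc⟩)
  rcases ha.adj_or_forall_adj_eq with hua | hNa <;> rcases hb.adj_or_forall_adj_eq with hub | hNb
  · exact h3 ⟨p, a, b, hne.1.symm, hne.2.symm, hab, hup, hua, hub⟩
  · exact mixed a b hne.1 ha hua hb hNb
  · exact mixed b a hne.2 hb hub ha hNa
  · exact no_two_leaves a b hab ha hb hNa hNb

end Deletion

section Opening

variable {V : Type*} [DecidableEq V] {G : SimpleGraph V} {u v s x : V}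

theorem not_stalWinS_empty_zero : ¬ StalWinS G ∅ ∅ 0 := fun h => by
  obtain ⟨x, hx, -⟩ := h.stallerWon_of_zero
  exact Finset.notMem_empty x hx

theorem exists_forall_stalWinS_of_stalWinS_empty {k : ℕ} (hδ : ∀ v, ∃ z, G.Adj v z)
    (h : StalWinS G ∅ ∅ (k + 1)) : ∃ u, ∀ v, v ≠ u → StalWinS G {v} {u} k := by
  rcases h.exists_of_succ with ⟨x, hx, -⟩ | ⟨u, -, -, hD⟩
  · exact absurd hx (Finset.notMem_empty x)
  rw [insert_empty_eq] at hD
  cases hD with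
  | done _ _ _ hwon => exact absurd hwon (not_stallerWon_singleton hδ u)
  | step _ _ _ _ hall =>
    refine ⟨u, fun v hvu => ?_⟩
    simpa using hall v (Finset.notMem_empty v) (by simpa using hvu)

theorem stalWinS_empty_of_forall_stalWinS {k : ℕ} {v₀ : V} (hv₀ : v₀ ≠ u)
    (h : ∀ v, v ≠ u → StalWinS G {v} {u} k) : StalWinS G ∅ ∅ (k + 1) := by
  refine .step _ _ _ u (Finset.notMem_empty u) (Finset.notMem_empty u) ?_
  refine .step _ _ _ ⟨v₀, Finset.notMem_empty v₀, by simpa using hv₀⟩ fun v _ hvu => ?_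
  simpa using h v (by simpa using hvu)

theorem not_stalWinS_empty_one (hδ : ∀ v, ∃ z, G.Adj v z) : ¬ StalWinS G ∅ ∅ 1 := fun h => by
  obtain ⟨u, hu⟩ := exists_forall_stalWinS_of_stalWinS_empty hδ h
  obtain ⟨v, hv⟩ := hδ u
  exact not_stallerWon_singleton hδ u
    (by simpa using ((hu v (G.ne_of_adj hv).symm).stallerWon_of_zero))

theorem stalWinS_empty_two_of_isStrongSupport (h : IsStrongSupport G s) :
    StalWinS G ∅ ∅ 2 := by
  obtain ⟨a, b, hab, hsa, hsb, ⟨a', ha', hNa⟩, ⟨b', hb', hNb⟩⟩ := h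
  have leaf_adj : ∀ {c c' : V}, G.Adj s c → (∀ z, G.Adj c z → z = c') →
      ∀ z, G.Adj c z → z ∈ insert s (∅ : Finset V) := fun hsc hN z hz => by
    simp [hN z hz, ← hN s (G.adj_symm hsc)]
  exact .of_double_threat (Finset.notMem_empty s) (Finset.notMem_empty s) hab
    (Finset.notMem_empty a) (by simpa using (G.ne_of_adj hsa).symm)
    (Finset.notMem_empty b) (by simpa using (G.ne_of_adj hsb).symm)
    (leaf_adj hsa hNa) (leaf_adj hsb hNb)

theorem exists_isStrongSupport_of_stalWinS_empty_two (hδ : ∀ v, ∃ z, G.Adj v z)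
    (h : StalWinS G ∅ ∅ 2) : ∃ s, IsStrongSupport G s := by
  obtain ⟨w, hw⟩ := exists_forall_stalWinS_of_stalWinS_empty hδ h
  have threat : ∀ v, v ≠ w → ∃ y, y ≠ v ∧ y ≠ w ∧ StallerWon G {y, w} := by
    intro v hvw
    rcases (hw v hvw).exists_of_succ with hwon | ⟨y, hyv, hyw, hD⟩
    · exact absurd hwon (not_stallerWon_singleton hδ w)
    · simp only [Finset.mem_singleton] at hyv hyw
      exact ⟨y, hyv, hyw, hD.stallerWon_of_zero⟩
  have leaf : ∀ y, (∀ z, G.Adj y z → z = w) → G.Adj w y ∧ IsLeaf G y := fun y hy => by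
    obtain ⟨z, hz⟩ := hδ y
    exact ⟨G.adj_symm (hy z hz ▸ hz), w, hy z hz ▸ hz, hy⟩
  obtain ⟨v, hwv⟩ := hδ w
  obtain ⟨y₁, -, h₁w, h₁⟩ := threat v (G.ne_of_adj hwv).symm
  obtain ⟨y₂, h₂₁, -, h₂⟩ := threat y₁ h₁w
  rcases h₁.pair with hw₁ | hy₁ <;> rcases h₂.pair with hw₂ | hy₂
  · exact absurd ((hw₁ v hwv).symm.trans (hw₂ v hwv)) h₂₁.symm
  · exact absurd (hw₁ y₂ (leaf y₂ hy₂).1) h₂₁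
  · exact absurd (hw₂ y₁ (leaf y₁ hy₁).1) h₂₁.symm
  · exact ⟨w, y₂, y₁, h₂₁, (leaf y₂ hy₂).1, (leaf y₁ hy₁).1, (leaf y₂ hy₂).2, (leaf y₁ hy₁).2⟩

theorem stalWinS_two_of_isIsolatedMinus (hx : IsIsolatedMinus G u x) (hxv : x ≠ v) :
    StalWinS G {v} {u} 2 :=
  .of_forall_adj_mem (by simpa using hxv) (by simpa using hx.1)
    fun z hz => by simpa using hx.2 z hz

theorem stalWinS_two_of_isStrongSupportMinus (hs : IsStrongSupportMinus G u s) (hvs : v ≠ s)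
    (hv : ¬ IsLeafMinus G u s v) : StalWinS G {v} {u} 2 := by
  obtain ⟨a, b, hab, ha, hb⟩ := hs
  have hleaf : ∀ {c}, IsLeafMinus G u s c → c ∉ ({v} : Finset V) ∧
      c ∉ insert s ({u} : Finset V) ∧ ∀ z, G.Adj c z → z ∈ insert s ({u} : Finset V) := fun hc =>
    ⟨by rintro hcv; exact hv (Finset.mem_singleton.mp hcv ▸ hc), by simp [hc.ne_center, hc.1],
      fun z hz => by simpa using hc.2.2.2 z hz⟩
  exact .of_double_threat (by simpa using hvs.symm) (by simpa using ha.2.1) hab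
    (hleaf ha).1 (hleaf ha).2.1 (hleaf hb).1 (hleaf hb).2.1 (hleaf ha).2.2 (hleaf hb).2.2

/-- Every reply of Dominator misses one of the two gadgets. -/
theorem stalWinS_empty_three_of_conditionII (h : ConditionII G u) : StalWinS G ∅ ∅ 3 := by
  rcases h with ⟨s₁, s₂, hne, h₁, h₂⟩ | ⟨⟨x, hx⟩, s, hs⟩
  · refine stalWinS_empty_of_forall_stalWinS h₁.ne fun v _ => ?_
    by_cases hv : v = s₁ ∨ IsLeafMinus G u s₁ v
    · obtain ⟨hvs, hvl⟩ := h₁.notMem_gadget h₂ hne hv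
      exact stalWinS_two_of_isStrongSupportMinus h₂ hvs hvl
    · push Not at hv
      exact stalWinS_two_of_isStrongSupportMinus h₁ hv.1 hv.2
  · refine stalWinS_empty_of_forall_stalWinS hs.ne fun v _ => ?_
    by_cases hxv : x = v
    · subst hxv
      have ⟨a, _, _, ha, _⟩ := hs
      exact stalWinS_two_of_isStrongSupportMinus hs (hx.ne_of_isLeafMinus ha) hx.not_isLeafMinus
    · exact stalWinS_two_of_isIsolatedMinus hx hxv

theorem IsBlockingReply.threat_cases (h : IsBlockingReply G u v) {w y : V} (hwu : w ≠ u)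
    (hwv : w ≠ v) (hyv : y ≠ v) (hyu : y ≠ u) (hwon : StallerWon G {y, w, u}) :
    (∀ z, G.Adj w z → z = y ∨ z = u) ∨ IsLeafMinus G u w y := by
  rcases hwon.triple with hN | hN | hN
  · obtain ⟨z, hz, hzy, hzw⟩ := h.1 y w hyv hwv
    exact ((hN z hz).elim hzy hzw).elim
  · exact .inl hN
  · refine .inr ⟨hyu, hwu, ?_, hN⟩
    by_contra hwy
    refine hyv (h.2.1 y ⟨hyu, fun z hz => (hN z hz).resolve_left ?_⟩)
    rintro rfl
    exact hwy (G.adj_symm hz)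

theorem not_stalWinS_two_of_isBlockingReply (hδ : ∀ v, ∃ z, G.Adj v z)
    (h : IsBlockingReply G u v) : ¬ StalWinS G {v} {u} 2 := by
  intro hwin
  rcases hwin.exists_of_succ with hwon | ⟨w, hwv, hwu, hD⟩
  · exact not_stallerWon_singleton hδ u hwon
  simp only [Finset.mem_singleton] at hwv hwu
  have hw : ¬ IsIsolatedMinus G u w := fun hw => hwv (h.2.1 w hw)
  rcases hD.exists_two_threats_of_one with hwon | ⟨y₁, y₂, hne, h₁D, h₂D, h₁S, h₂S, h₁, h₂⟩
  · rcases hwon.pair with hN | hN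
    · obtain ⟨z, hz, hzw, -⟩ := h.1 w w hwv hwv
      exact hzw (hN z hz)
    · exact hw ⟨hwu, hN⟩
  simp only [Finset.mem_singleton, Finset.mem_insert, not_or] at h₁D h₂D h₁S h₂S
  rcases h.threat_cases hwu hwv h₁D h₁S.2 h₁ with hN₁ | hl₁ <;>
    rcases h.threat_cases hwu hwv h₂D h₂S.2 h₂ with hN₂ | hl₂
  · refine hw ⟨hwu, fun z hz => ?_⟩
    rcases hN₁ z hz with rfl | hzu
    · exact (hN₂ z hz).resolve_left hne
    · exact hzu
  · exact ((hN₁ y₂ hl₂.2.2.1).elim hne.symm h₂S.2).elim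
  · exact ((hN₂ y₁ hl₁.2.2.1).elim hne h₁S.2).elim
  · exact (h.2.2 w y₁ y₂ hwv hne hl₁ hl₂).elim h₁D h₂D

theorem exists_conditionII_of_stalWinS_empty_three (hδ : ∀ v, ∃ z, G.Adj v z)
    (hi : ∀ v, ¬ IsStrongSupport G v) (h : StalWinS G ∅ ∅ 3) : ∃ u, ConditionII G u := by
  by_contra! hII
  obtain ⟨u, hu⟩ := exists_forall_stalWinS_of_stalWinS_empty hδ h
  obtain ⟨v, hvu, hv⟩ : ∃ v, v ≠ u ∧ IsBlockingReply G u v := by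
    by_cases hs : ∃ s, IsStrongSupportMinus G u s
    · obtain ⟨s, hs⟩ := hs
      exact exists_isBlockingReply_of_isStrongSupportMinus hi hII hs
    · push Not at hs
      exact exists_isBlockingReply_of_forall_not_isStrongSupportMinus hδ hi hs
  exact not_stalWinS_two_of_isBlockingReply hδ hv (hu v hvu)

end Opening

/-- Let `G` be a graph with `δ(G) ≥ 1`.  Then `γ_SMB'(G) = 3` if and only if
(i) `G` has no strong support vertices, and (ii) there is a vertex `u` such
that either `G - u` has at least two strong support vertices, or `G - u` has
exactly one isolated vertex and a strong support vertex. -/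
theorem gammaSMB'_eq_three_iff {V : Type*} [Fintype V] [DecidableEq V]
    (G : SimpleGraph V) (hdelta : ∀ v, ∃ u, G.Adj v u) :
    gammaSMB' G = 3 ↔
      ((∀ v, ¬ IsStrongSupport G v) ∧
        ∃ u : V,
          (∃ v w : ({x : V | x ≠ u} : Set V), v ≠ w ∧
              IsStrongSupport (G.induce {x : V | x ≠ u}) v ∧
              IsStrongSupport (G.induce {x : V | x ≠ u}) w) ∨
          ((∃! v : ({x : V | x ≠ u} : Set V),
              IsIsolatedVertex (G.induce {x : V | x ≠ u}) v) ∧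
            ∃ v : ({x : V | x ≠ u} : Set V),
              IsStrongSupport (G.induce {x : V | x ≠ u}) v)) := by
  rw [show (3 : ℕ∞) = (3 : ℕ) from rfl, gammaSMB'_eq_coe_iff]
  constructor
  · rintro ⟨h3, hlt⟩
    have hi : ∀ v, ¬ IsStrongSupport G v := fun v hv =>
      hlt 2 (by norm_num) (stalWinS_empty_two_of_isStrongSupport hv)
    obtain ⟨u, hu⟩ := exists_conditionII_of_stalWinS_empty_three hdelta hi h3
    exact ⟨hi, u, (conditionII_iff hdelta hi u).1 hu⟩
  · rintro ⟨hi, u, hu⟩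
    refine ⟨stalWinS_empty_three_of_conditionII ((conditionII_iff hdelta hi u).2 hu),
      fun m hm hwin => ?_⟩
    interval_cases m
    · exact not_stalWinS_empty_zero hwin
    · exact not_stalWinS_empty_one hdelta hwin
    · obtain ⟨s, hs⟩ := exists_isStrongSupport_of_stalWinS_empty_two hdelta hwin
      exact hi s hs
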